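/- Let Θ̂_1, ..., Θ̂_k be positive definite matrices of sizes d_a×d_a with Θ̂_a = exp((H₀/k)·I_{d_a} + √(d_a)·H_a) where H₀ ∈ ℝ, each H_a is symmetric traceless, and H₀² + Σ_a ‖H_a‖_F² ≤ δ² with δ ≤ 1/√(max_a d_a). Then for each a, ‖I_{d_a} − Θ̂_a‖_F ≤ 2√(d_a)·δ, and the Kronecker product satisfies ‖I_D − Θ̂_1 ⊗ ··· ⊗ Θ̂_k‖_F ≤ 2k√D · δ · e^{2kδ}, where D = d₁···d_k. -/

import Mathlib

open Matrix

/-- The Frobenius norm of a real matrix. -/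
noncomputable def frobeniusNorm {m n : Type*} [Fintype m] [Fintype n]
    (A : Matrix m n ℝ) : ℝ :=
  Real.sqrt (∑ i, ∑ j, (A i j) ^ 2)

/-- The Kronecker product `Θ₁ ⊗ ⋯ ⊗ Θ_k` of the matrices `Θ a`, realized as a
matrix on the tensor product index `(a : Fin k) → Fin (d a)`. -/
def kron {k : ℕ} (d : Fin k → ℕ)
    (Θ : (a : Fin k) → Matrix (Fin (d a)) (Fin (d a)) ℝ) :
    Matrix ((a : Fin k) → Fin (d a)) ((a : Fin k) → Fin (d a)) ℝ :=
  Matrix.of fun x y => ∏ a, Θ a (x a) (y a)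

/-!
Write `Θ̂_a = exp X_a`. Since `H_a` is traceless it is Frobenius-orthogonal to the identity, so
`‖X_a‖_F² = d_a ((H₀/k)² + ‖H_a‖_F²) ≤ d_a δ² ≤ 1`, and the exponential series gives
`‖exp X_a - I‖_F ≤ e^{‖X_a‖_F} - 1 ≤ 2 ‖X_a‖_F` (the Frobenius norm is submultiplicative).
For the Kronecker product, `⊗` is multilinear and `‖⊗ M_a‖_F = ∏ ‖M_a‖_F`; expanding
`⊗ (I + (Θ̂_a - I))` over the subsets of factors gives
`‖⊗ Θ̂_a - I‖_F ≤ ∏ (‖I‖_F + ‖Θ̂_a - I‖_F) - ∏ ‖I‖_F ≤ ((1 + 2δ)^k - 1) √D ≤ 2kδ e^{2kδ} √D`.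
-/

lemma Real.exp_sub_one_le_mul_exp (x : ℝ) : Real.exp x - 1 ≤ x * Real.exp x := by
  have h := mul_le_mul_of_nonneg_right (Real.one_sub_le_exp_neg x) (Real.exp_pos x).le
  rw [← Real.exp_add, neg_add_cancel, Real.exp_zero] at h
  linarith

lemma one_add_pow_sub_one_le {η : ℝ} (hη : 0 ≤ η) (k : ℕ) :
    (1 + η) ^ k - 1 ≤ k * η * Real.exp (k * η) := by
  calc (1 + η) ^ k - 1 ≤ Real.exp η ^ k - 1 := by
        gcongr
        linarith [Real.add_one_le_exp η]
    _ = Real.exp (k * η) - 1 := by rw [← Real.exp_nat_mul]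
    _ ≤ k * η * Real.exp (k * η) := Real.exp_sub_one_le_mul_exp _

lemma sqrt_mul_le_one_of_le_one_div_sqrt {x δ : ℝ} (hδ : δ ≤ 1 / Real.sqrt x) :
    Real.sqrt x * δ ≤ 1 := by
  rcases (Real.sqrt_nonneg x).eq_or_lt with hx | hx
  · simp [← hx]
  · rwa [le_div_iff₀' hx] at hδ

section FrobeniusNorm

attribute [local instance] Matrix.frobeniusSeminormedAddCommGroup
  Matrix.frobeniusNormedAddCommGroup Matrix.frobeniusNormedSpace
  Matrix.frobeniusNormedRing Matrix.frobeniusNormedAlgebra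

variable {m n : Type*} [Fintype m] [Fintype n]

lemma frobeniusNorm_eq_norm (A : Matrix m n ℝ) : frobeniusNorm A = ‖A‖ := by
  simp only [frobeniusNorm, frobenius_norm_def, Real.norm_eq_abs, Real.rpow_two, sq_abs,
    Real.sqrt_eq_rpow]

lemma frobeniusNorm_sq (A : Matrix m n ℝ) : frobeniusNorm A ^ 2 = ∑ i, ∑ j, A i j ^ 2 :=
  Real.sq_sqrt (by positivity)

lemma frobenius_norm_one [DecidableEq n] :
    ‖(1 : Matrix n n ℝ)‖ = Real.sqrt (Fintype.card n) := by
  simpa using congrArg NNReal.toReal (frobenius_nnnorm_one (n := n) (α := ℝ))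

lemma frobeniusNorm_smul_one_add_sq [DecidableEq n] (c : ℝ) {H : Matrix n n ℝ}
    (hH : H.trace = 0) :
    frobeniusNorm (c • 1 + H) ^ 2 = Fintype.card n * c ^ 2 + frobeniusNorm H ^ 2 := by
  have hentry : ∀ i j, (c • (1 : Matrix n n ℝ) + H) i j ^ 2
      = H i j ^ 2 + 2 * c * (if i = j then H i j else 0) + (if i = j then c ^ 2 else 0) := by
    intro i j
    rw [Matrix.add_apply, Matrix.smul_apply, Matrix.one_apply, smul_eq_mul]
    split_ifs <;> ring
  have htr : ∑ i, H i i = 0 := hH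
  simp only [frobeniusNorm_sq, hentry, Finset.sum_add_distrib, ← Finset.mul_sum,
    Finset.sum_ite_eq, Finset.mem_univ, if_true, htr, mul_zero, add_zero, Finset.sum_const,
    Finset.card_univ, nsmul_eq_mul]
  ring

lemma norm_exp_sub_one_le {𝔸 : Type*} [NormedRing 𝔸] [NormedAlgebra ℝ 𝔸] [CompleteSpace 𝔸]
    (x : 𝔸) : ‖NormedSpace.exp x - 1‖ ≤ Real.exp ‖x‖ - 1 := by
  have hx := (hasSum_nat_add_iff' 1).mpr (NormedSpace.exp_series_hasSum_exp' (𝕂 := ℝ) x)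
  have hr := (hasSum_nat_add_iff' 1).mpr (NormedSpace.expSeries_div_hasSum_exp ‖x‖)
  simp only [Finset.sum_range_one, pow_zero, Nat.factorial_zero, Nat.cast_one, inv_one,
    one_smul, div_one] at hx hr
  rw [← Real.exp_eq_exp_ℝ] at hr
  refine hx.norm_le_of_bounded hr fun n => ?_
  rw [norm_smul, Real.norm_of_nonneg (by positivity), div_eq_inv_mul]
  gcongr
  exact norm_pow_le' x n.succ_pos

lemma frobeniusNorm_one_sub_exp_le [DecidableEq n] (A : Matrix n n ℝ) (hA : frobeniusNorm A ≤ 1) :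
    frobeniusNorm (1 - NormedSpace.exp A) ≤ 2 * frobeniusNorm A := by
  rw [frobeniusNorm_eq_norm] at hA ⊢
  rw [frobeniusNorm_eq_norm, norm_sub_rev]
  calc ‖NormedSpace.exp A - 1‖ ≤ Real.exp ‖A‖ - 1 := norm_exp_sub_one_le A
    _ ≤ |Real.exp ‖A‖ - 1| := le_abs_self _
    _ ≤ 2 * |‖A‖| := Real.abs_exp_sub_one_le (by rwa [abs_norm])
    _ = 2 * ‖A‖ := by rw [abs_norm]

lemma frobeniusNorm_smul_one_add_sqrt_smul_le [DecidableEq n] {c δ : ℝ} {H : Matrix n n ℝ}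
    (hH : H.trace = 0) (hδ : 0 ≤ δ) (hcH : c ^ 2 + frobeniusNorm H ^ 2 ≤ δ ^ 2) :
    frobeniusNorm (c • 1 + Real.sqrt (Fintype.card n) • H)
      ≤ Real.sqrt (Fintype.card n) * δ := by
  have hsq := frobeniusNorm_smul_one_add_sq c (H := Real.sqrt (Fintype.card n) • H)
    (by rw [Matrix.trace_smul, hH, smul_zero])
  rw [frobeniusNorm_eq_norm (_ • H), norm_smul, Real.norm_of_nonneg (Real.sqrt_nonneg _),
    mul_pow, Real.sq_sqrt (Nat.cast_nonneg _), ← frobeniusNorm_eq_norm] at hsq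
  refine le_of_pow_le_pow_left₀ two_ne_zero (by positivity) ?_
  rw [hsq, mul_pow, Real.sq_sqrt (Nat.cast_nonneg _)]
  nlinarith [Nat.cast_nonneg (α := ℝ) (Fintype.card n)]

section Kronecker

variable {k : ℕ} {d : Fin k → ℕ}

lemma kron_apply (M : ∀ a, Matrix (Fin (d a)) (Fin (d a)) ℝ) (x y : ∀ a, Fin (d a)) :
    kron d M x y = ∏ a, M a (x a) (y a) := rfl

lemma kron_one : kron d (fun _ => 1) = 1 := by
  ext x y
  simp only [kron_apply, Matrix.one_apply, Fintype.prod_boole, funext_iff]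
  congr

open Classical in
lemma kron_add (M N : ∀ a, Matrix (Fin (d a)) (Fin (d a)) ℝ) :
    kron d (M + N) = ∑ t : Finset (Fin k), kron d (t.piecewise M N) := by
  ext x y
  simp only [kron_apply, Matrix.sum_apply, Pi.add_apply, Matrix.add_apply, Fintype.prod_add]
  refine Finset.sum_congr rfl fun t _ => ?_
  rw [← Finset.prod_mul_prod_compl t]
  congr 1 <;> refine Finset.prod_congr rfl fun a ha => ?_
  · rw [Finset.piecewise_eq_of_mem _ _ _ ha]
  · rw [Finset.piecewise_eq_of_notMem _ _ _ (Finset.mem_compl.mp ha)]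

lemma norm_kron (M : ∀ a, Matrix (Fin (d a)) (Fin (d a)) ℝ) : ‖kron d M‖ = ∏ a, ‖M a‖ := by
  simp only [← frobeniusNorm_eq_norm, frobeniusNorm]
  rw [← Real.sqrt_prod _ fun a _ => by positivity]
  congr 1
  simp only [kron_apply, ← Finset.prod_pow, Fintype.prod_sum]

open Classical in
lemma norm_kron_piecewise (t : Finset (Fin k)) (M N : ∀ a, Matrix (Fin (d a)) (Fin (d a)) ℝ) :
    ‖kron d (t.piecewise M N)‖ = (∏ a ∈ t, ‖M a‖) * ∏ a ∈ tᶜ, ‖N a‖ := by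
  rw [norm_kron, ← Finset.prod_mul_prod_compl t]
  congr 1 <;> refine Finset.prod_congr rfl fun a ha => ?_
  · rw [Finset.piecewise_eq_of_mem _ _ _ ha]
  · rw [Finset.piecewise_eq_of_notMem _ _ _ (Finset.mem_compl.mp ha)]

lemma norm_kron_add_sub_kron_le (M N : ∀ a, Matrix (Fin (d a)) (Fin (d a)) ℝ) :
    ‖kron d (M + N) - kron d N‖ ≤ ∏ a, (‖M a‖ + ‖N a‖) - ∏ a, ‖N a‖ := by
  classical
  have hempty : kron d ((∅ : Finset (Fin k)).piecewise M N) = kron d N := by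
    rw [Finset.piecewise_empty]
  calc ‖kron d (M + N) - kron d N‖
      = ‖∑ t ∈ Finset.univ.erase (∅ : Finset (Fin k)), kron d (t.piecewise M N)‖ := by
        rw [Finset.sum_erase_eq_sub (Finset.mem_univ _), hempty, kron_add]
    _ ≤ ∑ t ∈ Finset.univ.erase (∅ : Finset (Fin k)), ‖kron d (t.piecewise M N)‖ :=
        norm_sum_le _ _
    _ = ∏ a, (‖M a‖ + ‖N a‖) - ∏ a, ‖N a‖ := by
        rw [Finset.sum_erase_eq_sub (Finset.mem_univ _), norm_kron_piecewise, Fintype.prod_add]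
        simp only [norm_kron_piecewise, Finset.prod_empty, Finset.compl_empty, one_mul]

lemma norm_kron_sub_kron_le {η : ℝ} (A B : ∀ a, Matrix (Fin (d a)) (Fin (d a)) ℝ)
    (hAB : ∀ a, ‖A a - B a‖ ≤ η * ‖B a‖) :
    ‖kron d A - kron d B‖ ≤ ((1 + η) ^ k - 1) * ∏ a, ‖B a‖ := by
  calc ‖kron d A - kron d B‖ = ‖kron d ((A - B) + B) - kron d B‖ := by rw [sub_add_cancel]
    _ ≤ ∏ a, (‖(A - B) a‖ + ‖B a‖) - ∏ a, ‖B a‖ := norm_kron_add_sub_kron_le _ _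
    _ ≤ ∏ a, ((1 + η) * ‖B a‖) - ∏ a, ‖B a‖ := by
        gcongr with a
        rw [Pi.sub_apply]
        linarith [hAB a]
    _ = ((1 + η) ^ k - 1) * ∏ a, ‖B a‖ := by
        rw [Finset.prod_mul_distrib, Finset.prod_const, Finset.card_univ, Fintype.card_fin]
        ring

lemma frobeniusNorm_one_sub_kron_le {η : ℝ} (hη : 0 ≤ η) (Θ : ∀ a, Matrix (Fin (d a)) (Fin (d a)) ℝ)
    (hΘ : ∀ a, frobeniusNorm (1 - Θ a) ≤ η * Real.sqrt (d a)) :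
    frobeniusNorm (1 - kron d Θ)
      ≤ k * η * Real.sqrt ((∏ a, d a : ℕ) : ℝ) * Real.exp (k * η) := by
  have hnorm_one : ∏ a, ‖(1 : Matrix (Fin (d a)) (Fin (d a)) ℝ)‖
      = Real.sqrt ((∏ a, d a : ℕ) : ℝ) := by
    rw [← norm_kron, kron_one, frobenius_norm_one, Fintype.card_pi]
    simp only [Fintype.card_fin]
  have hrel : ∀ a, ‖Θ a - 1‖ ≤ η * ‖(1 : Matrix (Fin (d a)) (Fin (d a)) ℝ)‖ := fun a => by
    rw [norm_sub_rev, ← frobeniusNorm_eq_norm, frobenius_norm_one, Fintype.card_fin]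
    exact hΘ a
  rw [frobeniusNorm_eq_norm, norm_sub_rev, ← kron_one]
  calc ‖kron d Θ - kron d (fun _ => 1)‖
      ≤ ((1 + η) ^ k - 1) * ∏ a, ‖(1 : Matrix (Fin (d a)) (Fin (d a)) ℝ)‖ :=
        norm_kron_sub_kron_le Θ _ hrel
    _ ≤ k * η * Real.exp (k * η) * Real.sqrt ((∏ a, d a : ℕ) : ℝ) := by
        rw [hnorm_one]
        gcongr
        exact one_add_pow_sub_one_le hη k
    _ = k * η * Real.sqrt ((∏ a, d a : ℕ) : ℝ) * Real.exp (k * η) := by ring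

end Kronecker

end FrobeniusNorm

theorem stmt8_general {k : ℕ} (d : Fin k → ℕ) (H0 : ℝ)
    (H : (a : Fin k) → Matrix (Fin (d a)) (Fin (d a)) ℝ)
    (htr : ∀ a, (H a).trace = 0)
    (δ : ℝ) (hδ0 : 0 ≤ δ)
    (hnorm : H0 ^ 2 + ∑ a, (frobeniusNorm (H a)) ^ 2 ≤ δ ^ 2)
    (hδ : ∀ a, δ ≤ 1 / Real.sqrt (d a))
    (Θhat : (a : Fin k) → Matrix (Fin (d a)) (Fin (d a)) ℝ)
    (hΘ : ∀ a, Θhat a =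
      NormedSpace.exp ((H0 / k) • (1 : Matrix (Fin (d a)) (Fin (d a)) ℝ)
        + Real.sqrt (d a) • H a)) :
    (∀ a, frobeniusNorm (1 - Θhat a) ≤ 2 * Real.sqrt (d a) * δ) ∧
      frobeniusNorm (1 - kron d Θhat)
        ≤ 2 * k * Real.sqrt ((∏ a, d a : ℕ) : ℝ) * δ * Real.exp (2 * k * δ) := by
  have hcoef : ∀ a, (H0 / k) ^ 2 + frobeniusNorm (H a) ^ 2 ≤ δ ^ 2 := fun a => by
    have hk : (1 : ℝ) ≤ k := by exact_mod_cast a.pos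
    have hH0 : (H0 / k) ^ 2 ≤ H0 ^ 2 := by
      rw [div_pow]
      exact div_le_self (sq_nonneg _) (one_le_pow₀ hk)
    have hHa := Finset.single_le_sum (fun b _ => sq_nonneg (frobeniusNorm (H b)))
      (Finset.mem_univ a)
    linarith
  have hfactor : ∀ a, frobeniusNorm (1 - Θhat a) ≤ 2 * Real.sqrt (d a) * δ := fun a => by
    have hX := frobeniusNorm_smul_one_add_sqrt_smul_le (htr a) hδ0 (hcoef a)
    rw [Fintype.card_fin] at hX
    rw [hΘ a]
    calc _ ≤ 2 * frobeniusNorm ((H0 / k) • (1 : Matrix (Fin (d a)) (Fin (d a)) ℝ)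
          + Real.sqrt (d a) • H a) :=
          frobeniusNorm_one_sub_exp_le _ (hX.trans (sqrt_mul_le_one_of_le_one_div_sqrt (hδ a)))
      _ ≤ 2 * Real.sqrt (d a) * δ := by linarith
  refine ⟨hfactor, ?_⟩
  calc frobeniusNorm (1 - kron d Θhat)
      ≤ k * (2 * δ) * Real.sqrt ((∏ a, d a : ℕ) : ℝ) * Real.exp (k * (2 * δ)) :=
        frobeniusNorm_one_sub_kron_le (by positivity) Θhat fun a => by linarith [hfactor a]
    _ = 2 * k * Real.sqrt ((∏ a, d a : ℕ) : ℝ) * δ * Real.exp (2 * k * δ) := by ring_nf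

/-- If `Θ̂_a = exp((H₀/k)·I + √(d_a)·H_a)` with each `H_a` symmetric
traceless, `H₀² + Σ_a ‖H_a‖_F² ≤ δ²` and `0 ≤ δ ≤ 1/√(d_a)` for every `a` (i.e.
`δ ≤ 1/√(max_a d_a)`), then `‖I - Θ̂_a‖_F ≤ 2 √(d_a) δ` for each `a`, and
`‖I_D - Θ̂_1 ⊗ ⋯ ⊗ Θ̂_k‖_F ≤ 2 k √D δ e^{2kδ}` where `D = d₁⋯d_k`. -/
theorem stmt8 {k : ℕ} (hk : 0 < k) (d : Fin k → ℕ) (H0 : ℝ)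
    (H : (a : Fin k) → Matrix (Fin (d a)) (Fin (d a)) ℝ)
    (hsym : ∀ a, (H a)ᵀ = H a) (htr : ∀ a, (H a).trace = 0)
    (δ : ℝ) (hδ0 : 0 ≤ δ)
    (hnorm : H0 ^ 2 + ∑ a, (frobeniusNorm (H a)) ^ 2 ≤ δ ^ 2)
    (hδ : ∀ a, δ ≤ 1 / Real.sqrt (d a))
    (Θhat : (a : Fin k) → Matrix (Fin (d a)) (Fin (d a)) ℝ)
    (hΘ : ∀ a, Θhat a =
      NormedSpace.exp ((H0 / k) • (1 : Matrix (Fin (d a)) (Fin (d a)) ℝ)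
        + Real.sqrt (d a) • H a)) :
    (∀ a, frobeniusNorm (1 - Θhat a) ≤ 2 * Real.sqrt (d a) * δ) ∧
      frobeniusNorm (1 - kron d Θhat)
        ≤ 2 * k * Real.sqrt ((∏ a, d a : ℕ) : ℝ) * δ * Real.exp (2 * k * δ) :=
  stmt8_general d H0 H htr δ hδ0 hnorm hδ Θhat hΘ
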